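/- Let α, β be nonnegative integrable functions on ℝ^d and let Φ be a smooth convex function such that the pushforward of the measure α(x)dx under x ↦ ∇Φ(x) equals β(y)dy. Then for every smooth convex function Ψ on ℝ^d (with Ψ* integrable against β), the functional J[Ψ] = ∫ Ψ(x)α(x)dx + ∫ Ψ*(y)β(y)dy satisfies J[Ψ] ≥ J[Φ]; that is, Φ minimizes J among convex functions. -/

import Mathlib

open Real MeasureTheory
open scoped RealInnerProductSpace

/-- The Legendre–Fenchel transform `Ψ*(y) = sup_z (z ⬝ y - Ψ z)`. -/
noncomputable def legendreTransform {d : ℕ} (Ψ : EuclideanSpace ℝ (Fin d) → ℝ)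
    (y : EuclideanSpace ℝ (Fin d)) : ℝ :=
  ⨆ z : EuclideanSpace ℝ (Fin d), (⟪z, y⟫ - Ψ z)

lemma convex_grad_ineq {d : ℕ} {Φ : EuclideanSpace ℝ (Fin d) → ℝ}
    (hconv : ConvexOn ℝ Set.univ Φ) {g x : EuclideanSpace ℝ (Fin d)}
    (hg : HasGradientAt Φ g x) (z : EuclideanSpace ℝ (Fin d)) :
    Φ x + ⟪g, z - x⟫ ≤ Φ z := by
  set c : ℝ → EuclideanSpace ℝ (Fin d) := fun t => AffineMap.lineMap x z t with hc
  have hcderiv : HasDerivAt c (z - x) 0 := by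
    have h1 : HasDerivAt (fun t : ℝ => t • (z - x) + x) ((1 : ℝ) • (z - x)) 0 :=
      ((hasDerivAt_id (0 : ℝ)).smul_const (z - x)).add_const x
    simpa [hc, AffineMap.lineMap_apply] using h1
  have hF : HasFDerivAt Φ ((InnerProductSpace.toDual ℝ _) g) x := hg.hasFDerivAt
  have hγ : HasDerivAt (Φ ∘ c) ⟪g, z - x⟫ 0 := by
    have hc0 : c 0 = x := by simp [hc]
    rw [← hc0] at hF
    have := hF.comp_hasDerivAt (0 : ℝ) hcderiv
    simpa [InnerProductSpace.toDual_apply_apply] using this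
  have hγconv : ConvexOn ℝ Set.univ (Φ ∘ c) := by
    have := hconv.comp_affineMap (AffineMap.lineMap x z : ℝ →ᵃ[ℝ] EuclideanSpace ℝ (Fin d))
    simpa [Set.preimage_univ] using this
  have hslope := hγconv.le_slope_of_hasDerivAt (Set.mem_univ (0 : ℝ)) (Set.mem_univ (1 : ℝ))
    one_pos hγ
  have h0 : (Φ ∘ c) 0 = Φ x := by simp [hc]
  have h1 : (Φ ∘ c) 1 = Φ z := by simp [hc]
  rw [slope_def_field, h0, h1] at hslope
  simp only [sub_zero, div_one] at hslope
  linarith [hslope]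

lemma legendre_measurable {d : ℕ} {Φ : EuclideanSpace ℝ (Fin d) → ℝ} (hΦ : Continuous Φ) :
    Measurable (legendreTransform Φ) := by
  obtain ⟨u, hu⟩ := TopologicalSpace.exists_dense_seq (EuclideanSpace ℝ (Fin d))
  have key : ∀ y, legendreTransform Φ y = ⨆ n, (⟪u n, y⟫ - Φ (u n)) := by
    intro y
    simp only [legendreTransform]
    set f : EuclideanSpace ℝ (Fin d) → ℝ := fun z => ⟪z, y⟫ - Φ z with hf
    have hfc : Continuous f := ((continuous_id.inner continuous_const)).sub hΦ
    have hdense : ∀ M : ℝ, (∀ n, f (u n) ≤ M) → ∀ z, f z ≤ M := by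
      intro M hM z
      have hcl : IsClosed {w | f w ≤ M} := isClosed_le hfc continuous_const
      have hsub : Set.range u ⊆ {w | f w ≤ M} := by
        rintro _ ⟨n, rfl⟩; exact hM n
      have := hcl.closure_subset_iff.2 hsub
      rw [hu.closure_range] at this
      exact this (Set.mem_univ z)
    by_cases hb : BddAbove (Set.range f)
    · have hb' : BddAbove (Set.range fun n => f (u n)) :=
        hb.mono (Set.range_comp f u ▸ Set.image_subset_range f _ )
      apply le_antisymm
      · refine ciSup_le fun z => ?_
        refine hdense _ (fun n => le_ciSup hb' n) z
      · exact ciSup_le fun n => le_ciSup hb (u n)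
    · have hb' : ¬ BddAbove (Set.range fun n => f (u n)) := by
        rintro ⟨M, hM⟩
        refine hb ⟨M, ?_⟩
        rintro _ ⟨z, rfl⟩
        exact hdense M (fun n => hM (Set.mem_range_self n)) z
      rw [Real.iSup_of_not_bddAbove hb, Real.iSup_of_not_bddAbove hb']
  have : legendreTransform Φ = fun y => ⨆ n, (⟪u n, y⟫ - Φ (u n)) := funext key
  rw [this]
  exact Measurable.iSup fun n =>
    ((continuous_const.inner continuous_id).sub continuous_const).measurable

/-- If the gradient of the smooth convex function `Φ` pushes `α(x)dx` forward to `β(y)dy`,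
then `Φ` minimizes the functional `J[Ψ] = ∫ Ψ α + ∫ Ψ* β` among smooth convex
functions `Ψ` (all integrals being assumed finite). -/
theorem monge_ampere_variational_principle {d : ℕ}
    (α β : EuclideanSpace ℝ (Fin d) → ℝ)
    (hα : ∀ x, 0 ≤ α x) (hβ : ∀ y, 0 ≤ β y)
    (hαint : Integrable α) (hβint : Integrable β)
    (Φ Ψ : EuclideanSpace ℝ (Fin d) → ℝ)
    (hΦsmooth : ContDiff ℝ (⊤ : ℕ∞) Φ) (hΦconv : ConvexOn ℝ Set.univ Φ)
    (hΨsmooth : ContDiff ℝ (⊤ : ℕ∞) Ψ) (hΨconv : ConvexOn ℝ Set.univ Ψ)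
    (T : EuclideanSpace ℝ (Fin d) → EuclideanSpace ℝ (Fin d))
    (hT : ∀ x, HasGradientAt Φ (T x) x)
    (hpush : (volume.withDensity (fun x => ENNReal.ofReal (α x))).map T =
      volume.withDensity (fun y => ENNReal.ofReal (β y)))
    (hΨstar : ∀ y, BddAbove (Set.range fun z => ⟪z, y⟫ - Ψ z))
    (hint1 : Integrable (fun x => Ψ x * α x))
    (hint2 : Integrable (fun y => legendreTransform Ψ y * β y))
    (hint3 : Integrable (fun x => Φ x * α x))
    (hint4 : Integrable (fun y => legendreTransform Φ y * β y)) :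
    (∫ x, Φ x * α x) + ∫ y, legendreTransform Φ y * β y ≤
      (∫ x, Ψ x * α x) + ∫ y, legendreTransform Ψ y * β y := by
  classical
  set μ := volume.withDensity fun x => ENNReal.ofReal (α x) with hμ
  set ν := volume.withDensity fun y => ENNReal.ofReal (β y) with hν
  have hαmeas : AEMeasurable (fun x => (α x).toNNReal) volume :=
    measurable_real_toNNReal.comp_aemeasurable hαint.aemeasurable
  have hβmeas : AEMeasurable (fun y => (β y).toNNReal) volume :=
    measurable_real_toNNReal.comp_aemeasurable hβint.aemeasurable
  have hμd : μ = volume.withDensity fun x => ((α x).toNNReal : ENNReal) := rfl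
  have hνd : ν = volume.withDensity fun y => ((β y).toNNReal : ENNReal) := rfl
  -- continuity of T
  have hTcont : Continuous T := by
    have hTe : T = fun x =>
        (InnerProductSpace.toDual ℝ (EuclideanSpace ℝ (Fin d))).symm (fderiv ℝ Φ x) := by
      funext x
      have h1 : HasFDerivAt Φ ((InnerProductSpace.toDual ℝ _) (T x)) x := (hT x).hasFDerivAt
      rw [h1.fderiv]; simp
    rw [hTe]
    exact (LinearIsometryEquiv.continuous _).comp (hΦsmooth.continuous_fderiv (by simp))
  -- measurability of the transforms
  have hltΦ : Measurable (legendreTransform Φ) := legendre_measurable hΦsmooth.continuous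
  have hltΨ : Measurable (legendreTransform Ψ) := legendre_measurable hΨsmooth.continuous
  -- pointwise facts
  have hΦeq : ∀ x, legendreTransform Φ (T x) = ⟪x, T x⟫ - Φ x := by
    intro x
    simp only [legendreTransform]
    have hub : ∀ z, ⟪z, T x⟫ - Φ z ≤ ⟪x, T x⟫ - Φ x := by
      intro z
      have h1 := convex_grad_ineq hΦconv (hT x) z
      have h2 : ⟪T x, z - x⟫ = ⟪z, T x⟫ - ⟪x, T x⟫ := by
        rw [inner_sub_right, real_inner_comm (T x) z, real_inner_comm (T x) x]
      linarith
    refine le_antisymm (ciSup_le hub) ?_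
    exact le_ciSup ⟨⟪x, T x⟫ - Φ x, by rintro _ ⟨z, rfl⟩; exact hub z⟩ x
  have hFY : ∀ x, ⟪x, T x⟫ - Ψ x ≤ legendreTransform Ψ (T x) := by
    intro x
    simp only [legendreTransform]
    exact le_ciSup (hΨstar (T x)) x
  -- integral conversions for withDensity
  have intconvμ : ∀ g : EuclideanSpace ℝ (Fin d) → ℝ,
      (∫ x, g x ∂μ) = ∫ x, g x * α x := by
    intro g
    rw [hμd, integral_withDensity_eq_integral_smul₀ hαmeas]
    congr 1; funext x
    simp [NNReal.smul_def, Real.coe_toNNReal _ (hα x), mul_comm]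
  have intconvν : ∀ g : EuclideanSpace ℝ (Fin d) → ℝ,
      (∫ y, g y ∂ν) = ∫ y, g y * β y := by
    intro g
    rw [hνd, integral_withDensity_eq_integral_smul₀ hβmeas]
    congr 1; funext y
    simp [NNReal.smul_def, Real.coe_toNNReal _ (hβ y), mul_comm]
  have intgμ : ∀ g : EuclideanSpace ℝ (Fin d) → ℝ, AEStronglyMeasurable g volume →
      Integrable (fun x => g x * α x) volume → Integrable g μ := by
    intro g hm hi
    rw [hμd, integrable_withDensity_iff_integrable_smul₀ hαmeas]
    apply hi.congr
    filter_upwards with x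
    simp [NNReal.smul_def, Real.coe_toNNReal _ (hα x), mul_comm]
  have intgν : ∀ g : EuclideanSpace ℝ (Fin d) → ℝ, AEStronglyMeasurable g volume →
      Integrable (fun y => g y * β y) volume → Integrable g ν := by
    intro g hm hi
    rw [hνd, integrable_withDensity_iff_integrable_smul₀ hβmeas]
    apply hi.congr
    filter_upwards with y
    simp [NNReal.smul_def, Real.coe_toNNReal _ (hβ y), mul_comm]
  -- integrability facts
  have hΦμ : Integrable Φ μ := intgμ Φ hΦsmooth.continuous.aestronglyMeasurable hint3
  have hΨμ : Integrable Ψ μ := intgμ Ψ hΨsmooth.continuous.aestronglyMeasurable hint1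
  have hltΦν : Integrable (legendreTransform Φ) ν := intgν _ hltΦ.aestronglyMeasurable hint4
  have hltΨν : Integrable (legendreTransform Ψ) ν := intgν _ hltΨ.aestronglyMeasurable hint2
  have hTae : AEMeasurable T μ := hTcont.aemeasurable
  have hltΦT : Integrable (fun x => legendreTransform Φ (T x)) μ := by
    rw [← hpush] at hltΦν
    exact hltΦν.comp_aemeasurable hTae
  have hltΨT : Integrable (fun x => legendreTransform Ψ (T x)) μ := by
    rw [← hpush] at hltΨν
    exact hltΨν.comp_aemeasurable hTae
  -- transfer ν-integrals to μ-integrals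
  have mapΦ : (∫ y, legendreTransform Φ y ∂ν) = ∫ x, legendreTransform Φ (T x) ∂μ := by
    rw [← hpush]
    exact integral_map hTae (hpush ▸ hltΦ.aestronglyMeasurable : AEStronglyMeasurable _ (μ.map T))
  have mapΨ : (∫ y, legendreTransform Ψ y ∂ν) = ∫ x, legendreTransform Ψ (T x) ∂μ := by
    rw [← hpush]
    exact integral_map hTae (hpush ▸ hltΨ.aestronglyMeasurable : AEStronglyMeasurable _ (μ.map T))
  -- reduce goal to μ-integrals
  rw [← intconvμ Φ, ← intconvμ Ψ, ← intconvν (legendreTransform Φ),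
    ← intconvν (legendreTransform Ψ), mapΦ, mapΨ]
  rw [← integral_add hΦμ hltΦT, ← integral_add hΨμ hltΨT]
  apply integral_mono (hΦμ.add hltΦT) (hΨμ.add hltΨT)
  intro x
  have h1 := hΦeq x
  have h2 := hFY x
  simp only [Pi.add_apply]
  rw [h1]
  linarith
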